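/- arXiv:1907.04712 — 2 statements merged into one kernel-verified Lean document; each statement's English description precedes it below -/
import Mathlib

section
/- Let D be an exchangeable Borel measure on M★∞ (marks in [0,∞)) such that D({x : v_1 = 0}) < ∞ and D({x : v_1 ≠ 0 and |log v_1| > ε}) < ∞ for every ε > 0. Then for every n ≥ 2, D({x : π = {{n}, ℕ∖{n}}} ∩ {x : v_1 ≠ 1}) = 0; that is, D-almost everywhere on the event that π consists of the singleton block {n} and the block ℕ∖{n}, the mark of the infinite block equals 1. -/
open MeasureTheory ProbabilityTheory Filter Topology

/-- A marked partition of `ℕ`: an equivalence relation together with a mark function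
that is constant on each block. -/
structure MarkedPartition where
  rel : ℕ → ℕ → Prop
  refl : ∀ i, rel i i
  symm : ∀ {i j}, rel i j → rel j i
  trans : ∀ {i j k}, rel i j → rel j k → rel i k
  v : ℕ → ℝ
  consistent : ∀ {i j}, rel i j → v i = v j

namespace MarkedPartition

/-- The σ-algebra on marked partitions, generated by the maps `x ↦ x.rel i j` and `x ↦ x.v i`. -/
instance : MeasurableSpace MarkedPartition :=
  (⨆ (i : ℕ) (j : ℕ), MeasurableSpace.comap (fun x : MarkedPartition => x.rel i j) ⊤) ⊔
    (⨆ i : ℕ, MeasurableSpace.comap (fun x : MarkedPartition => x.v i) (inferInstance))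

/-- Action of a permutation of `ℕ` on marked partitions. -/
def perm (σ : Equiv.Perm ℕ) (x : MarkedPartition) : MarkedPartition where
  rel i j := x.rel (σ i) (σ j)
  refl i := x.refl _
  symm h := x.symm h
  trans h h' := x.trans h h'
  v i := x.v (σ i)
  consistent h := x.consistent h

/-- The block containing `i`. -/
def block (x : MarkedPartition) (i : ℕ) : Set ℕ := {j | x.rel i j}

/-- Non-degenerate: every finite block has mark `0`. -/
def NonDegenerate (x : MarkedPartition) : Prop := ∀ i, (x.block i).Finite → x.v i = 0

/-- Least element of the block containing `i`. -/
noncomputable def leastOf (x : MarkedPartition) (i : ℕ) : ℕ := sInf (x.block i)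

open Classical in
/-- The label of the block of `x` containing `i`, blocks being labelled in increasing
order of their least elements (labels start at `1`). -/
noncomputable def label (x : MarkedPartition) (i : ℕ) : ℕ :=
  ((Finset.range (x.leastOf i + 1)).filter (fun m => x.leastOf m = m)).card

end MarkedPartition

/-- A permutation is finitely supported. -/
def FinSupp (σ : Equiv.Perm ℕ) : Prop := {n | σ n ≠ n}.Finite

/-- Lexicographic order on pairs `(s, v)`. -/
def lexLe (a b : ℝ × ℝ) : Prop := a.1 < b.1 ∨ (a.1 = b.1 ∧ a.2 ≤ b.2)

/-- Membership in the space `Z↓`. -/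
def MemZdown (z : ℕ → ℝ × ℝ) : Prop :=
  (∀ k, (z k).1 ∈ Set.Icc (0:ℝ) 1 ∧ 0 ≤ (z k).2) ∧
  (∀ k, lexLe (z (k + 1)) (z k)) ∧
  (∀ n, ∑ k ∈ Finset.range n, (z k).1 ≤ 1) ∧
  (∀ k, (z k).1 = 0 → (z k).2 = 0)

/-- `t_n = s_1 + … + s_n`. -/
def cumSum (z : ℕ → ℝ × ℝ) (n : ℕ) : ℝ := ∑ k ∈ Finset.range n, (z k).1

open Classical in
/-- Index of the paintbox interval containing `u`, if any. -/
noncomputable def pbIdx (z : ℕ → ℝ × ℝ) (u : ℝ) : Option ℕ :=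
  if h : ∃ n, cumSum z n ≤ u ∧ u < cumSum z (n + 1) then some (Nat.find h) else none

/-- The paintbox marked partition built from `z` and the sequence `u` of uniform samples. -/
noncomputable def paintbox (z : ℕ → ℝ × ℝ) (u : ℕ → ℝ) : MarkedPartition where
  rel i j := i = j ∨ ((pbIdx z (u i)).isSome ∧ pbIdx z (u i) = pbIdx z (u j))
  refl _ := Or.inl rfl
  symm h := by
    rcases h with h | ⟨hs, he⟩
    · exact Or.inl h.symm
    · exact Or.inr ⟨he ▸ hs, he.symm⟩
  trans h h' := by
    rcases h with rfl | ⟨hs, he⟩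
    · exact h'
    · rcases h' with rfl | ⟨hs', he'⟩
      · exact Or.inr ⟨hs, he⟩
      · exact Or.inr ⟨hs, he.trans he'⟩
  v i := (pbIdx z (u i)).elim 0 (fun n => (z n).2)
  consistent h := by
    rcases h with rfl | ⟨hs, he⟩
    · rfl
    · try dsimp only
      rw [he]

/-- The uniform distribution on `[0,1]`. -/
noncomputable def uniform01 : Measure ℝ := volume.restrict (Set.Icc 0 1)

/-- `U` is an i.i.d. sequence of uniform random variables on `[0,1]` under `μ`. -/
def IsIIDUniform {Θ : Type*} [MeasurableSpace Θ] (μ : Measure Θ) (U : ℕ → Θ → ℝ) : Prop :=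
  (∀ n, Measurable (U n)) ∧ iIndepFun U μ ∧
    ∀ n, μ.map (U n) = uniform01

/-- The paintbox measure `ρ_z`, the law of the paintbox construction driven by the
i.i.d. uniform sequence `U` defined on `(Θ, μ)`. -/
noncomputable def paintboxLaw {Θ : Type*} [MeasurableSpace Θ] (μ : Measure Θ)
    (U : ℕ → Θ → ℝ) (z : ℕ → ℝ × ℝ) : Measure MarkedPartition :=
  μ.map (fun θ => paintbox z (fun n => U n θ))

open Classical in
/-- `#(B ∩ [n]) / n`. -/
noncomputable def freqAvg (B : Set ℕ) (n : ℕ) : ℝ :=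
  (((Finset.range n).filter (fun j => j ∈ B)).card : ℝ) / n

/-- `B` has an asymptotic frequency. -/
def HasFreq (B : Set ℕ) : Prop := ∃ l : ℝ, Tendsto (freqAvg B) atTop (𝓝 l)

/-- The asymptotic frequency of `B` (junk value if the limit does not exist). -/
noncomputable def freq (B : Set ℕ) : ℝ := limUnder atTop (freqAvg B)

/-- `x` has asymptotic frequencies. -/
def MarkedPartition.HasFreqs (x : MarkedPartition) : Prop := ∀ i, HasFreq (x.block i)

/-- The set of least representatives of infinite blocks of `x` with positive asymptotic
frequency. -/
def MarkedPartition.posReps (x : MarkedPartition) : Set ℕ :=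
  {r | x.leastOf r = r ∧ (x.block r).Infinite ∧ 0 < freq (x.block r)}

/-- `g` is the `⪯`-nonincreasing enumeration `|x|↓` of the pairs
(asymptotic frequency, mark) over the infinite blocks of `x` with positive frequency,
completed by `(0,0)` terms. -/
def IsRankedFreqs (x : MarkedPartition) (g : ℕ → ℝ × ℝ) : Prop :=
  (∀ k, lexLe (g (k + 1)) (g k)) ∧
  ∃ e : ℕ → ℕ, Set.BijOn e {k | g k ≠ (0, 0)} x.posReps ∧
    ∀ k, g k ≠ (0, 0) → g k = (freq (x.block (e k)), x.v (e k))

/-!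
By exchangeability, the events `{π = {{n}, ℕ ∖ {n}}, v₁ ∈ B}` for the different `n ≥ 2` all have
the same `D`-measure, since a transposition exchanging two such `n` fixes `1`. They are pairwise
disjoint subsets of `{v₁ ∈ B}`, so they are null as soon as `D(v₁ ∈ B) < ∞`. Taking `B = {0}` and
`B = {t ≠ 0, |log t| > 1/(k+1)}` covers every nonnegative mark other than `1`.
-/

open MeasureTheory Function

lemma measure_eq_zero_of_pairwise_disjoint_of_measure_eq {α ι : Type*} [MeasurableSpace α]
    [Countable ι] [Infinite ι] {μ : Measure α} {s : ι → Set α}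
    (hs : ∀ i, MeasurableSet (s i)) (hd : Pairwise (Disjoint on s))
    (heq : ∀ i j, μ (s i) = μ (s j)) (hfin : μ (⋃ i, s i) ≠ ⊤) (i : ι) : μ (s i) = 0 := by
  by_contra h
  apply hfin
  rw [measure_iUnion hd hs, funext fun j => heq j i]
  exact ENNReal.tsum_const_eq_top_of_ne_zero h

lemma finSupp_swap (n m : ℕ) : FinSupp (Equiv.swap n m) :=
  (Set.toFinite {n, m}).subset fun k hk => by
    by_contra h
    simp only [Set.mem_insert_iff, Set.mem_singleton_iff, not_or] at h
    exact hk (Equiv.swap_apply_of_ne_of_ne h.1 h.2)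

namespace MarkedPartition

@[fun_prop]
lemma measurable_rel (i j : ℕ) : Measurable fun x : MarkedPartition => x.rel i j :=
  measurable_iff_comap_le.2 <| le_sup_of_le_left <| le_iSup₂_of_le i j le_rfl

@[fun_prop]
lemma measurable_v (i : ℕ) : Measurable fun x : MarkedPartition => x.v i :=
  measurable_iff_comap_le.2 <| le_sup_of_le_right <| le_iSup_of_le i le_rfl

lemma measurable_of_forall_rel_v {β : Type*} [MeasurableSpace β] {f : β → MarkedPartition}
    (hrel : ∀ i j, Measurable fun b => (f b).rel i j) (hv : ∀ i, Measurable fun b => (f b).v i) :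
    Measurable f := by
  refine measurable_iff_comap_le.2 ?_
  simp only [instMeasurableSpace, MeasurableSpace.comap_sup, MeasurableSpace.comap_iSup,
    MeasurableSpace.comap_comp]
  exact sup_le (iSup₂_le fun i j => (hrel i j).comap_le) (iSup_le fun i => (hv i).comap_le)

lemma measurable_perm (σ : Equiv.Perm ℕ) : Measurable (perm σ) :=
  measurable_of_forall_rel_v (fun i j => measurable_rel (σ i) (σ j)) fun i => measurable_v (σ i)

lemma measure_preimage_perm {D : Measure MarkedPartition}
    (hexch : ∀ σ : Equiv.Perm ℕ, FinSupp σ → D.map (perm σ) = D) {σ : Equiv.Perm ℕ}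
    (hσ : FinSupp σ) {S : Set MarkedPartition} (hS : MeasurableSet S) :
    D (perm σ ⁻¹' S) = D S := by
  rw [← Measure.map_apply (measurable_perm σ) hS, hexch σ hσ]

def IsCosingleton (n : ℕ) (x : MarkedPartition) : Prop :=
  ∀ i j, x.rel i j ↔ ((i = n ∧ j = n) ∨ (i ≠ n ∧ j ≠ n))

lemma measurableSet_isCosingleton (n : ℕ) : MeasurableSet {x | IsCosingleton n x} := by
  unfold IsCosingleton
  exact measurableSet_setOfPred.2 (by fun_prop)

lemma isCosingleton_perm_iff {σ : Equiv.Perm ℕ} {n : ℕ} {x : MarkedPartition} :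
    IsCosingleton n (x.perm σ) ↔ IsCosingleton (σ n) x := by
  simp only [IsCosingleton, perm, ne_eq, ← σ.injective.eq_iff (b := n)]
  exact ⟨fun h => σ.forall_congr_right.1 fun i => σ.forall_congr_right.1 (h i),
    fun h i j => h (σ i) (σ j)⟩

lemma IsCosingleton.eq {m m' : ℕ} {x : MarkedPartition} (h : IsCosingleton m x)
    (h' : IsCosingleton m' x) : m = m' := by
  by_contra hne
  have := (h m (m + m' + 1)).1 ((h' m (m + m' + 1)).2 (Or.inr ⟨hne, by omega⟩))
  omega

lemma measure_isCosingleton_eq_zero {D : Measure MarkedPartition}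
    (hexch : ∀ σ : Equiv.Perm ℕ, FinSupp σ → D.map (perm σ) = D) {n : ℕ} (hn : n ≠ 0)
    {B : Set ℝ} (hB : MeasurableSet B) (hfin : D {x | x.v 0 ∈ B} ≠ ⊤) :
    D {x | IsCosingleton n x ∧ x.v 0 ∈ B} = 0 := by
  set E : ℕ → Set MarkedPartition := fun k => {x | IsCosingleton (k + 1) x ∧ x.v 0 ∈ B}
  have hE : ∀ k, MeasurableSet (E k) := fun k =>
    (measurableSet_isCosingleton _).inter (measurable_v 0 hB)
  have hperm : ∀ k l, perm (Equiv.swap (k + 1) (l + 1)) ⁻¹' E l = E k := fun k l => by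
    ext x
    simp only [E, Set.mem_preimage, Set.mem_ofPred_eq, isCosingleton_perm_iff,
      Equiv.swap_apply_right]
    rw [show (x.perm (Equiv.swap (k + 1) (l + 1))).v 0 = x.v 0 from
      congrArg x.v (Equiv.swap_apply_of_ne_of_ne (by omega) (by omega))]
  have hdisj : Pairwise (Disjoint on E) := fun k l hkl =>
    Set.disjoint_left.2 fun x hk hl => hkl (by simpa using hk.1.eq hl.1)
  have hfinE : D (⋃ k, E k) ≠ ⊤ :=
    ne_top_of_le_ne_top hfin (measure_mono (Set.iUnion_subset fun _ _ => And.right))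
  obtain ⟨k, rfl⟩ := Nat.exists_eq_succ_of_ne_zero hn
  refine measure_eq_zero_of_pairwise_disjoint_of_measure_eq hE hdisj (fun k l => ?_) hfinE k
  rw [← hperm k l, measure_preimage_perm hexch (finSupp_swap _ _) (hE l)]

end MarkedPartition

/-- Indices start at `0`: the paper's `v₁` is `x.v 0` and its `n ≥ 2` is `n ≠ 0`. -/
theorem cosingleton_mark_one
    (D : Measure MarkedPartition)
    (hsupp : D {x | ¬ ((∀ i, 0 ≤ x.v i) ∧ x.NonDegenerate)} = 0)
    (hexch : ∀ σ : Equiv.Perm ℕ, FinSupp σ → D.map (MarkedPartition.perm σ) = D)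
    (hfin0 : D {x | x.v 0 = 0} ≠ ⊤)
    (hfinlog : ∀ ε : ℝ, 0 < ε → D {x | x.v 0 ≠ 0 ∧ ε < |Real.log (x.v 0)|} ≠ ⊤) :
    ∀ n : ℕ, n ≠ 0 →
      D {x | (∀ i j, x.rel i j ↔ ((i = n ∧ j = n) ∨ (i ≠ n ∧ j ≠ n))) ∧ x.v 0 ≠ 1} = 0 := by
  intro n hn
  have hzero :=
    MarkedPartition.measure_isCosingleton_eq_zero hexch hn (measurableSet_singleton 0) hfin0
  have hlog : ∀ k : ℕ, D {x | MarkedPartition.IsCosingleton n x ∧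
      x.v 0 ∈ {t : ℝ | t ≠ 0 ∧ 1 / ((k : ℝ) + 1) < |Real.log t|}} = 0 := fun k =>
    MarkedPartition.measure_isCosingleton_eq_zero hexch hn
      ((measurableSet_singleton 0).compl.inter (measurableSet_lt measurable_const
        (by fun_prop : Measurable fun t : ℝ => |Real.log t|)))
      (hfinlog _ Nat.one_div_pos_of_nat)
  refine measure_mono_null ?_ (measure_union_null hsupp (measure_union_null hzero
    (measure_iUnion_null hlog)))
  rintro x ⟨hx, hv1⟩
  by_cases hsupp_x : (∀ i, 0 ≤ x.v i) ∧ x.NonDegenerate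
  · by_cases hv0 : x.v 0 = 0
    · exact Or.inr (Or.inl ⟨hx, hv0⟩)
    · have hlog_ne : Real.log (x.v 0) ≠ 0 :=
        Real.log_ne_zero_of_pos_of_ne_one ((hsupp_x.1 0).lt_of_ne' hv0) hv1
      obtain ⟨k, hk⟩ := exists_nat_one_div_lt (abs_pos.2 hlog_ne)
      exact Or.inr (Or.inr (Set.mem_iUnion.2 ⟨k, hx, hv0, hk⟩))
  · exact Or.inl hsupp_x
end

section
/- Let f : [0,∞) → [0,∞) be Borel measurable, let α, β ∈ ℝ and v > 0. Define I_f(u) = ∫₀^u f(r)^β dr ∈ [0,∞] (Lebesgue integral, with the convention 0^β := 0), τ_f(s) = inf{u ≥ 0 : I_f(u) = s} ∈ [0,∞] (with inf ∅ := ∞), and h(u) := v·f(v^α u). Then for every s ≥ 0: τ_h(s) = v^{−α} · τ_f(v^{α−β} s), with the convention v^{−α}·∞ := ∞. -/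
/-!
The substitution `r = v^α r'` gives `I_h(u) = v^{β-α} · I_f(v^α u)`. Since `v^{β-α}` is finite and
nonzero, `I_h(u) = s` holds exactly when `I_f(v^α u) = v^{α-β} s`, so the level set defining `τ_h(s)`
is the one defining `τ_f(v^{α-β} s)` scaled by `v^{-α}`; multiplication by a finite nonzero constant
commutes with infima in `[0,∞]`.
-/

open MeasureTheory
open scoped ENNReal

/-- `v^β` with the convention `0^β = 0`, as an extended nonnegative real. -/
noncomputable def powE (v β : ℝ) : ℝ≥0∞ := if v = 0 then 0 else ENNReal.ofReal (v ^ β)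

/-- `I_f(u) = ∫₀^u f(r)^β dr ∈ [0,∞]`. -/
noncomputable def Ifun (f : ℝ → ℝ) (β : ℝ) (u : ℝ) : ℝ≥0∞ :=
  ∫⁻ r in Set.Ioc (0:ℝ) u, powE (f r) β

/-- `τ_f(s) = inf {u ≥ 0 : I_f(u) = s} ∈ [0,∞]`, with `inf ∅ = ∞`. -/
noncomputable def tauFun (f : ℝ → ℝ) (β : ℝ) (s : ℝ) : ℝ≥0∞ :=
  sInf (ENNReal.ofReal '' {u : ℝ | 0 ≤ u ∧ Ifun f β u = ENNReal.ofReal s})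

theorem powE_mul {c x : ℝ} (hc : 0 < c) (hx : 0 ≤ x) (β : ℝ) :
    powE (c * x) β = ENNReal.ofReal (c ^ β) * powE x β := by
  rcases hx.eq_or_lt with rfl | hx
  · simp [powE]
  · rw [powE, powE, if_neg (by positivity), if_neg hx.ne', Real.mul_rpow hc.le hx.le,
      ENNReal.ofReal_mul (by positivity)]

theorem setLIntegral_Ioc_comp_const_mul (g : ℝ → ℝ≥0∞) {a : ℝ} (ha : 0 < a) (u : ℝ) :
    ∫⁻ r in Set.Ioc 0 u, g (a * r) =
      ENNReal.ofReal a⁻¹ * ∫⁻ x in Set.Ioc 0 (a * u), g x := by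
  have hemb := measurableEmbedding_mulLeft₀ (G₀ := ℝ) ha.ne'
  rw [(⟨hemb.measurable, rfl⟩ : MeasurePreserving (a * ·) volume _).setLIntegral_comp_emb hemb,
    Set.image_mul_left_Ioc ha, mul_zero, Real.map_volume_mul_left ha.ne', Measure.restrict_smul,
    lintegral_smul_measure, abs_of_pos (inv_pos.mpr ha), smul_eq_mul]

theorem Ifun_const_mul_comp_const_mul {f : ℝ → ℝ} (hf : ∀ r, 0 ≤ f r) (β : ℝ) {c a : ℝ}
    (hc : 0 < c) (ha : 0 < a) (u : ℝ) :
    Ifun (fun r => c * f (a * r)) β u = ENNReal.ofReal (c ^ β / a) * Ifun f β (a * u) := by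
  simp only [Ifun, powE_mul hc (hf _)]
  rw [lintegral_const_mul' _ _ ENNReal.ofReal_ne_top,
    setLIntegral_Ioc_comp_const_mul (fun x => powE (f x) β) ha, ← mul_assoc,
    ← ENNReal.ofReal_mul (by positivity), div_eq_mul_inv]

theorem sInf_ofReal_image_preimage_const_mul {a : ℝ} (ha : 0 < a) (S : Set ℝ) :
    sInf (ENNReal.ofReal '' ((a * ·) ⁻¹' S)) =
      ENNReal.ofReal a⁻¹ * sInf (ENNReal.ofReal '' S) := by
  have hset : ENNReal.ofReal '' ((a * ·) ⁻¹' S) =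
      (ENNReal.ofReal a⁻¹ * ·) '' (ENNReal.ofReal '' S) := by
    ext x
    simp only [Set.mem_image, Set.mem_preimage, exists_exists_and_eq_and]
    constructor
    · rintro ⟨u, hu, rfl⟩
      refine ⟨a * u, hu, ?_⟩
      rw [← ENNReal.ofReal_mul (by positivity), inv_mul_cancel_left₀ ha.ne']
    · rintro ⟨w, hw, rfl⟩
      refine ⟨a⁻¹ * w, by rwa [mul_inv_cancel_left₀ ha.ne'], ?_⟩
      rw [ENNReal.ofReal_mul (by positivity)]
  rw [hset, sInf_image', sInf_eq_iInf',
    ENNReal.mul_iInf_of_ne (by simpa using ha) ENNReal.ofReal_ne_top]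

theorem tauFun_of_Ifun_eq_mul_comp {f g : ℝ → ℝ} {β k a : ℝ} (hk : 0 < k) (ha : 0 < a)
    (hI : ∀ u, Ifun g β u = ENNReal.ofReal k * Ifun f β (a * u)) (s : ℝ) :
    tauFun g β s = ENNReal.ofReal a⁻¹ * tauFun f β (s / k) := by
  have hset : {u : ℝ | 0 ≤ u ∧ Ifun g β u = ENNReal.ofReal s} =
      (a * ·) ⁻¹' {w : ℝ | 0 ≤ w ∧ Ifun f β w = ENNReal.ofReal (s / k)} := by
    ext u
    rw [Set.mem_preimage, Set.mem_ofPred_eq, Set.mem_ofPred_eq, hI, mul_nonneg_iff_of_pos_left ha,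
      ← mul_div_cancel₀ s hk.ne', ENNReal.ofReal_mul hk.le, mul_div_cancel_left₀ _ hk.ne',
      ENNReal.mul_right_inj (by simpa using hk) ENNReal.ofReal_ne_top]
  rw [tauFun, hset, sInf_ofReal_image_preimage_const_mul ha, tauFun]

theorem timeChange_scaling_general (f : ℝ → ℝ) (hf0 : ∀ r, 0 ≤ f r)
    (α β v : ℝ) (hv : 0 < v) (s : ℝ) :
    tauFun (fun u => v * f (v ^ α * u)) β s =
      ENNReal.ofReal (v ^ (-α)) * tauFun f β (v ^ (α - β) * s) := by
  have hva : 0 < v ^ α := Real.rpow_pos_of_pos hv α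
  have hscale : s / (v ^ β / v ^ α) = v ^ (α - β) * s := by
    rw [Real.rpow_sub hv]
    field_simp
  rw [tauFun_of_Ifun_eq_mul_comp (by positivity) hva (Ifun_const_mul_comp_const_mul hf0 β hv hva),
    hscale, Real.rpow_neg hv.le]

/-- **Scaling of Lamperti-type time changes.** For Borel `f : [0,∞) → [0,∞)`, `α, β ∈ ℝ`,
`v > 0` and `h(u) = v·f(v^α u)`, one has `τ_h(s) = v^{−α}·τ_f(v^{α−β} s)` for every
`s ≥ 0` (with the convention `v^{−α}·∞ = ∞`). -/
theorem timeChange_scaling (f : ℝ → ℝ) (hf : Measurable f) (hf0 : ∀ r, 0 ≤ f r)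
    (α β v : ℝ) (hv : 0 < v) (s : ℝ) (hs : 0 ≤ s) :
    tauFun (fun u => v * f (v ^ α * u)) β s =
      ENNReal.ofReal (v ^ (-α)) * tauFun f β (v ^ (α - β) * s) :=
  timeChange_scaling_general f hf0 α β v hv s
end
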